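/- Let L be a free abelian group of finite rank, A a commutative ring, and R the J-adic completion of A[L] with I = JR. If N is a positive integer invertible in A, then the group of 1-units 1 + I ⊆ R^× has no nontrivial N-torsion: every x ∈ R with x ≡ 1 (mod I) and x^N = 1 satisfies x = 1. Consequently every group homomorphism from a finite abelian group of exponent dividing N to (1+I)^× is trivial. -/

import Mathlib

set_option maxHeartbeats 1000000
set_option synthInstance.maxHeartbeats 400000

open AddMonoidAlgebra

section generic

variable (A : Type*) [CommRing A] (B : Type*) [CommRing B] [Algebra A B] (J : Ideal B)

/-- Transition maps of the inverse system `(B/J^k)_k`. -/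
noncomputable def idealTrans (k : ℕ) : B ⧸ J ^ (k + 1) →+* B ⧸ J ^ k :=
  Ideal.Quotient.factor (Ideal.pow_le_pow_right (Nat.le_succ k))

/-- The `J`-adic completion `lim_k B/J^k`, realized as a subalgebra of the product
`∏ k, B/J^k` (the compatible families). -/
noncomputable def adicLim : Subalgebra A (∀ k : ℕ, B ⧸ J ^ k) where
  carrier := {f | ∀ k, idealTrans B J k (f (k + 1)) = f k}
  mul_mem' := fun ha hb k => by
    rw [Pi.mul_apply, Pi.mul_apply, map_mul, ha k, hb k]
  add_mem' := fun ha hb k => by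
    rw [Pi.add_apply, Pi.add_apply, map_add, ha k, hb k]
  algebraMap_mem' := fun a k => by
    rw [Pi.algebraMap_apply, Pi.algebraMap_apply,
      IsScalarTower.algebraMap_apply A B (B ⧸ J ^ (k + 1)),
      Ideal.Quotient.algebraMap_eq, idealTrans, Ideal.Quotient.factor_mk,
      IsScalarTower.algebraMap_apply A B (B ⧸ J ^ k), Ideal.Quotient.algebraMap_eq]

/-- The canonical map `B → lim_k B/J^k`. -/
noncomputable def adicLimOf : B →ₐ[A] adicLim A B J :=
  AlgHom.codRestrict (AlgHom.pi (R := A) (A := fun k => B ⧸ J ^ k)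
      (fun k => Ideal.Quotient.mkₐ A (J ^ k)))
    (adicLim A B J) (fun x k => by
      simp only [AlgHom.pi_apply, Ideal.Quotient.mkₐ_eq_mk, idealTrans,
        Ideal.Quotient.factor_mk])

end generic

section grpring

variable (A : Type*) [CommRing A] (L : Type*) [AddCommGroup L]

/-- The augmentation map of the group ring `A[L]`, sending each group element `δ_ℓ` to `1`. -/
noncomputable def aug : AddMonoidAlgebra A L →ₐ[A] A :=
  AddMonoidAlgebra.lift A A L 1

/-- The augmentation ideal `J ⊆ A[L]`. -/
noncomputable def augIdeal : Ideal (AddMonoidAlgebra A L) :=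
  RingHom.ker (aug A L)

/-- `R`, the `J`-adic completion of the group ring `A[L]`. -/
noncomputable abbrev RR := adicLim A (AddMonoidAlgebra A L) (augIdeal A L)

end grpring

/-! If `x - 1` is nilpotent and `x ^ N = 1`, then `0 = x ^ N - 1 = (x - 1) (1 + x + ⋯ + x ^ (N - 1))`,
and the second factor is `≡ N` modulo the nilpotent `x - 1`, hence a unit when `N` is; so `x = 1`.
In `R = lim_k A[L]/J^k` each component of an element of `I = J R` is nilpotent (its `k`-th power
lies in `J^k`), so this applies componentwise. -/

open Finset

section OneUnits

variable {S : Type*} [CommRing S]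

lemma isNilpotent_geom_sum_sub_natCast {x : S} (hx : IsNilpotent (x - 1)) (N : ℕ) :
    IsNilpotent (∑ i ∈ range N, x ^ i - N) := by
  have hdvd : x - 1 ∣ ∑ i ∈ range N, x ^ i - N := by
    rw [show (N : S) = ∑ _i ∈ range N, (1 : S) by simp, ← sum_sub_distrib]
    exact dvd_sum fun i _ => sub_one_dvd_pow_sub_one x i
  obtain ⟨c, hc⟩ := hdvd
  rw [hc]
  exact (Commute.all _ _).isNilpotent_mul_right hx

lemma eq_one_of_pow_eq_one_of_isNilpotent_sub_one {N : ℕ} (hN : IsUnit (N : S)) {x : S}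
    (hx : IsNilpotent (x - 1)) (hxN : x ^ N = 1) : x = 1 := by
  have hsum : IsUnit (∑ i ∈ range N, x ^ i) := by
    simpa using (isNilpotent_geom_sum_sub_natCast hx N).isUnit_add_left_of_commute hN
      (Commute.all _ _)
  have hzero : (∑ i ∈ range N, x ^ i) * (x - 1) = 0 := by
    rw [geom_sum_mul, hxN, sub_self]
  exact sub_eq_zero.mp (hsum.mul_right_eq_zero.mp hzero)

end OneUnits

section AdicLim

variable (A : Type*) [CommRing A] (B : Type*) [CommRing B] [Algebra A B] (J : Ideal B)

noncomputable def adicLimProj (k : ℕ) : adicLim A B J →+* B ⧸ J ^ k :=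
  (Pi.evalRingHom (fun k => B ⧸ J ^ k) k).comp (adicLim A B J).val.toRingHom

lemma adicLimProj_comp_adicLimOf (k : ℕ) :
    (adicLimProj A B J k).comp (adicLimOf A B J).toRingHom = Ideal.Quotient.mk (J ^ k) :=
  RingHom.ext fun _ => rfl

variable {A B J}

lemma isNilpotent_adicLimProj_of_mem_map {x : adicLim A B J}
    (hx : x ∈ J.map (adicLimOf A B J).toRingHom) (k : ℕ) :
    IsNilpotent (adicLimProj A B J k x) := by
  have hxk : adicLimProj A B J k x ∈ J.map (Ideal.Quotient.mk (J ^ k)) := by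
    simpa only [Ideal.map_map, adicLimProj_comp_adicLimOf] using
      Ideal.mem_map_of_mem (adicLimProj A B J k) hx
  have hpow := Ideal.pow_mem_pow hxk k
  rw [← Ideal.map_pow, Ideal.map_quotient_self, Ideal.mem_bot] at hpow
  exact ⟨k, hpow⟩

lemma adicLim_eq_one_of_pow_eq_one {N : ℕ} (hN : IsUnit (N : adicLim A B J)) {x : adicLim A B J}
    (hx : x - 1 ∈ J.map (adicLimOf A B J).toRingHom) (hxN : x ^ N = 1) : x = 1 := by
  ext k
  change adicLimProj A B J k x = 1
  refine eq_one_of_pow_eq_one_of_isNilpotent_sub_one (N := N) ?_ ?_ ?_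
  · simpa only [map_natCast] using hN.map (adicLimProj A B J k)
  · simpa only [map_sub, map_one] using isNilpotent_adicLimProj_of_mem_map hx k
  · rw [← map_pow, hxN, map_one]

end AdicLim

theorem statement13_general (A : Type*) [CommRing A] (L : Type*) [AddCommGroup L]
    (N : ℕ) (hN : IsUnit (N : A)) :
    (∀ x : RR A L,
        x - 1 ∈ (augIdeal A L).map (adicLimOf A (AddMonoidAlgebra A L) (augIdeal A L)).toRingHom →
        x ^ N = 1 → x = 1) ∧
    (∀ (G : Type) [CommGroup G] [Finite G], (∀ g : G, g ^ N = 1) →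
      ∀ f : G →* (RR A L)ˣ,
        (∀ g : G, ((f g : RR A L) - 1 ∈
          (augIdeal A L).map (adicLimOf A (AddMonoidAlgebra A L) (augIdeal A L)).toRingHom)) →
        f = 1) := by
  have hNR : IsUnit (N : RR A L) := by
    simpa only [map_natCast] using hN.map (algebraMap A (RR A L))
  have torsion_free : ∀ x : RR A L,
      x - 1 ∈ (augIdeal A L).map (adicLimOf A (AddMonoidAlgebra A L) (augIdeal A L)).toRingHom →
      x ^ N = 1 → x = 1 :=
    fun _ hx hxN => adicLim_eq_one_of_pow_eq_one hNR hx hxN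
  refine ⟨torsion_free, fun G _ _ hG f hf => MonoidHom.ext fun g => Units.ext ?_⟩
  exact torsion_free _ (hf g) (by rw [← Units.val_pow_eq_pow_val, ← map_pow, hG g, map_one, Units.val_one])

/-- If `N` is invertible in `A`, the group of `1`-units `1 + I ⊆ R^×` of the
completed group ring `R` has no nontrivial `N`-torsion, and consequently every homomorphism from
a finite abelian group of exponent dividing `N` to `(1+I)^×` is trivial. -/
theorem statement13 (A : Type*) [CommRing A] (L : Type*) [AddCommGroup L]
    [Module.Free ℤ L] [Module.Finite ℤ L]
    (N : ℕ) (hN0 : 0 < N) (hN : IsUnit (N : A)) :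
    (∀ x : RR A L,
        x - 1 ∈ (augIdeal A L).map (adicLimOf A (AddMonoidAlgebra A L) (augIdeal A L)).toRingHom →
        x ^ N = 1 → x = 1) ∧
    (∀ (G : Type) [CommGroup G] [Finite G], (∀ g : G, g ^ N = 1) →
      ∀ f : G →* (RR A L)ˣ,
        (∀ g : G, ((f g : RR A L) - 1 ∈
          (augIdeal A L).map (adicLimOf A (AddMonoidAlgebra A L) (augIdeal A L)).toRingHom)) →
        f = 1) :=
  statement13_general A L N hN
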